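/- arXiv:2309.04236 — 3 statements merged into one kernel-verified Lean document; each statement's English description precedes it below -/
import Mathlib

section
/- Let H, K and F be separable Hilbert spaces, let Z : H → K be a bounded linear operator with adjoint Z* : K → H, and let P be the orthogonal projection of H onto the closure of the range of Z*. Then for every bounded linear operator G : F → H and every λ > 0, ‖(I − P) G‖ ≤ λ^{1/2} ‖(Z*Z + λI)^{-1/2} G‖. -/
/-!
Write `B = Z*Z + λ` and `Q = 1 - P`. Since `Q` kills the range of `Z*`, we get `Q B = λ Q`, so
`‖Q B^{1/2}‖² = ‖Q B Q‖ = λ ‖Q‖ ≤ λ` by the C*-identity. Factoring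
`Q G = (Q B^{1/2}) (B^{-1/2} G)` gives the bound.
-/

open ContinuousLinearMap

/-- Real powers of a (positive) bounded operator on a real Hilbert space, defined via the
continuous functional calculus. -/
noncomputable def opow {E : Type*} [NormedAddCommGroup E] [InnerProductSpace ℝ E]
    [CompleteSpace E]
    [ContinuousFunctionalCalculus ℝ (E →L[ℝ] E) IsSelfAdjoint]
    (A : E →L[ℝ] E) (t : ℝ) : E →L[ℝ] E :=
  cfc (fun x : ℝ => x ^ t) A

theorem IsStarProjection.norm_mul_le_sqrt {E : Type*} [NormedRing E] [StarRing E] [CStarRing E]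
    [NormedAlgebra ℝ E] {p s : E} (hp : IsStarProjection p) (hs : IsSelfAdjoint s) {c : ℝ}
    (hc : 0 ≤ c) (hps : p * (s * s) = c • p) : ‖p * s‖ ≤ √c := by
  have hsq : ‖p * s‖ * ‖p * s‖ = c * ‖p‖ := by
    rw [← CStarRing.norm_self_mul_star, star_mul, hs.star_eq, hp.isSelfAdjoint.star_eq,
      ← mul_assoc, mul_assoc p, hps, smul_mul_assoc, hp.isIdempotentElem.eq, norm_smul,
      Real.norm_of_nonneg hc]
  refine Real.le_sqrt_of_sq_le ?_
  calc ‖p * s‖ ^ 2 = c * ‖p‖ := by rw [sq, hsq]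
    _ ≤ c * 1 := by gcongr; exact hp.norm_le
    _ = c := mul_one c

theorem ContinuousLinearMap.one_sub_comp_eq_zero_of_range_le {R E F : Type*} [Ring R]
    [AddCommGroup E] [Module R E] [TopologicalSpace E] [IsTopologicalAddGroup E]
    [AddCommMonoid F] [Module R F] [TopologicalSpace F]
    {P : E →L[R] E} (hP : IsIdempotentElem P) {T : F →L[R] E}
    (hT : LinearMap.range (T : F →ₗ[R] E) ≤ LinearMap.range (P : E →ₗ[R] E)) :
    (1 - P) ∘L T = 0 := by
  ext x
  obtain ⟨u, hu : P u = T x⟩ := hT ⟨x, rfl⟩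
  have hPu : P (P u) = P u := congr($hP.eq u)
  simp [← hu, hPu]

theorem ContinuousLinearMap.IsPositive.pos_of_mem_spectrum_add_smul_one {H : Type*}
    [NormedAddCommGroup H] [InnerProductSpace ℝ H] [CompleteSpace H] {A : H →L[ℝ] H}
    (hA : A.IsPositive) {lam : ℝ} (hlam : 0 < lam) :
    ∀ x ∈ spectrum ℝ (A + lam • 1), 0 < x := by
  rw [← Algebra.algebraMap_eq_smul_one, ← spectrum.add_singleton_eq]
  rintro _ ⟨x, hx, _, rfl, rfl⟩
  have := (SpectrumRestricts.nnreal_iff.mp hA.spectrumRestricts) x hx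
  linarith

section opow

variable {E : Type*} [NormedAddCommGroup E] [InnerProductSpace ℝ E] [CompleteSpace E]
  [ContinuousFunctionalCalculus ℝ (E →L[ℝ] E) IsSelfAdjoint] {A : E →L[ℝ] E}

theorem isSelfAdjoint_opow (A : E →L[ℝ] E) (t : ℝ) : IsSelfAdjoint (opow A t) :=
  cfc_predicate _ A

theorem opow_zero (hA : IsSelfAdjoint A) : opow A 0 = 1 := by
  simp only [opow, Real.rpow_zero]
  exact cfc_const_one ℝ A hA

theorem opow_one (hA : IsSelfAdjoint A) : opow A 1 = A := by
  simp only [opow, Real.rpow_one]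
  exact cfc_id' ℝ A hA

theorem opow_add (hpos : ∀ x ∈ spectrum ℝ A, 0 < x) (s t : ℝ) :
    opow A (s + t) = opow A s * opow A t := by
  have hcont (r : ℝ) : ContinuousOn (fun x : ℝ => x ^ r) (spectrum ℝ A) := fun x hx =>
    (Real.continuousAt_rpow_const x r (Or.inl (hpos x hx).ne')).continuousWithinAt
  rw [opow, opow, opow, ← cfc_mul _ _ A (hcont s) (hcont t)]
  exact cfc_congr fun x hx => Real.rpow_add (hpos x hx) s t

end opow

theorem stmt2_general
    {H K F : Type*}
    [NormedAddCommGroup H] [InnerProductSpace ℝ H] [CompleteSpace H]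
    [NormedAddCommGroup K] [InnerProductSpace ℝ K] [CompleteSpace K]
    [NormedAddCommGroup F] [InnerProductSpace ℝ F]
    [ContinuousFunctionalCalculus ℝ (H →L[ℝ] H) IsSelfAdjoint]
    (Z : H →L[ℝ] K)
    (P : H →L[ℝ] H) (hPsa : IsSelfAdjoint P) (hPidem : P ∘L P = P)
    (hPrange : LinearMap.range (P : H →ₗ[ℝ] H) = (LinearMap.range (adjoint Z : K →ₗ[ℝ] H)).topologicalClosure)
    (G : F →L[ℝ] H) (lam : ℝ) (hlam : 0 < lam) :
    ‖(1 - P) ∘L G‖ ≤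
      lam ^ (1 / 2 : ℝ) * ‖opow (adjoint Z ∘L Z + lam • 1) (-(1 / 2)) ∘L G‖ := by
  set B := adjoint Z ∘L Z + lam • 1
  have hZpos : (adjoint Z ∘L Z).IsPositive := by
    simpa [one_def] using isPositive_one.adjoint_conj Z
  have hBsa : IsSelfAdjoint B := hZpos.isSelfAdjoint.add (.smul (.all lam) (.one _))
  have hBpos := hZpos.pos_of_mem_spectrum_add_smul_one hlam
  have hQ : IsStarProjection (1 - P) := IsStarProjection.one_sub ⟨hPidem, hPsa⟩
  have hQZ : (1 - P) ∘L adjoint Z = 0 :=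
    one_sub_comp_eq_zero_of_range_le hPidem (hPrange ▸ Submodule.le_topologicalClosure _)
  have hQB : (1 - P) * (opow B (1 / 2) * opow B (1 / 2)) = lam • (1 - P) := by
    rw [← opow_add hBpos, add_halves, opow_one hBsa]
    change (1 - P) ∘L (adjoint Z ∘L Z + lam • 1) = lam • (1 - P)
    rw [comp_add, ← comp_assoc, hQZ, zero_comp, zero_add, comp_smul, ← mul_def, mul_one]
  have hST : opow B (1 / 2) * opow B (-(1 / 2)) = 1 := by
    rw [← opow_add hBpos, add_neg_cancel, opow_zero hBsa]
  have hfactor : (1 - P) ∘L G = ((1 - P) * opow B (1 / 2)) ∘L (opow B (-(1 / 2)) ∘L G) := by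
    rw [← comp_assoc, ← mul_def, mul_assoc, hST, mul_one]
  calc ‖(1 - P) ∘L G‖ ≤ ‖(1 - P) * opow B (1 / 2)‖ * ‖opow B (-(1 / 2)) ∘L G‖ :=
        hfactor ▸ opNorm_comp_le _ _
    _ ≤ lam ^ (1 / 2 : ℝ) * ‖opow B (-(1 / 2)) ∘L G‖ := by
        rw [← Real.sqrt_eq_rpow]
        gcongr
        exact hQ.norm_mul_le_sqrt (isSelfAdjoint_opow B _) hlam.le hQB

/-- the projection lemma (Rudi et al., Proposition 3). -/
theorem stmt2
    {H K F : Type*}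
    [NormedAddCommGroup H] [InnerProductSpace ℝ H] [CompleteSpace H]
    [TopologicalSpace.SeparableSpace H]
    [NormedAddCommGroup K] [InnerProductSpace ℝ K] [CompleteSpace K]
    [TopologicalSpace.SeparableSpace K]
    [NormedAddCommGroup F] [InnerProductSpace ℝ F] [CompleteSpace F]
    [TopologicalSpace.SeparableSpace F]
    [ContinuousFunctionalCalculus ℝ (H →L[ℝ] H) IsSelfAdjoint]
    (Z : H →L[ℝ] K)
    (P : H →L[ℝ] H) (hPsa : IsSelfAdjoint P) (hPidem : P ∘L P = P)
    (hPrange : LinearMap.range (P : H →ₗ[ℝ] H) = (LinearMap.range (adjoint Z : K →ₗ[ℝ] H)).topologicalClosure)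
    (G : F →L[ℝ] H) (lam : ℝ) (hlam : 0 < lam) :
    ‖(1 - P) ∘L G‖ ≤
      lam ^ (1 / 2 : ℝ) * ‖opow (adjoint Z ∘L Z + lam • 1) (-(1 / 2)) ∘L G‖ :=
  stmt2_general Z P hPsa hPidem hPrange G lam hlam
end

section
/- Let H and K be separable Hilbert spaces, let A be a positive bounded linear operator on H, let V : K → H be a bounded linear operator with V*V = id_K, and let B be a bounded linear operator on K. Then for all real numbers r and s with 0 ≤ r ≤ 1/2 and 0 ≤ s ≤ 1/2, ‖A^r V B V* A^s‖ ≤ ‖(V*AV)^r B (V*AV)^s‖, where the fractional powers of the positive operators A and V*AV are defined by the continuous functional calculus. -/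
open ContinuousLinearMap

/-!
Write `C = V* A V`. For a positive invertible `P` and an isometry `V`, `(V* P V)⁻¹ ≤ V* P⁻¹ V`.
Applied to `P = A + t`, this gives `V* f(A) V ≤ f(C)` for every
`f(x) = t ^ p (t⁻¹ - (t + x)⁻¹)`, and integrating over `t` gives Hansen's inequality
`V* A^p V ≤ C^p` for `0 ≤ p ≤ 1`. With `p = 2r` this says `‖A^r V y‖ ≤ ‖C^r y‖`, so left
multiplication by `A^r V` can be replaced by `C^r` without increasing operator norms.
The theorem follows by doing this on the left, taking adjoints, and doing it again.
-/

open MeasureTheory Set Real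
open scoped InnerProductSpace

section IntegralRepresentation

variable {A : Type*} [NormedRing A] [StarRing A] [NormedAlgebra ℝ A] [CompleteSpace A]
  [ContinuousFunctionalCalculus ℝ A IsSelfAdjoint]

lemma cfc_rpow_eq_setIntegral_rpowIntegrand₀₁ {p : ℝ} (hp : p ∈ Ioo 0 1) {μ : Measure ℝ}
    (hμ : ∀ x ∈ Ici (0 : ℝ), IntegrableOn (fun t => rpowIntegrand₀₁ p t x) (Ioi 0) μ ∧
      x ^ p = ∫ t in Ioi 0, rpowIntegrand₀₁ p t x ∂μ)
    {a : A} (ha : IsSelfAdjoint a) (hspec : spectrum ℝ a ⊆ Ici 0) :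
    IntegrableOn (fun t => cfc (rpowIntegrand₀₁ p t) a) (Ioi 0) μ ∧
      cfc (fun x : ℝ => x ^ p) a = ∫ t in Ioi 0, cfc (rpowIntegrand₀₁ p t) a ∂μ := by
  obtain ⟨M, hM⟩ := (spectrum.isCompact (𝕜 := ℝ) a).bddAbove
  have hM₀ : (0 : ℝ) ≤ max M 0 := le_max_right _ _
  have hf : ContinuousOn (rpowIntegrand₀₁ p).uncurry (Ioi 0 ×ˢ spectrum ℝ a) :=
    continuousOn_rpowIntegrand₀₁_uncurry hp _ hspec
  have hbound : ∀ᵐ t ∂μ.restrict (Ioi 0), ∀ z ∈ spectrum ℝ a,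
      ‖rpowIntegrand₀₁ p t z‖ ≤ ‖rpowIntegrand₀₁ p t (max M 0)‖ := by
    filter_upwards [ae_restrict_mem measurableSet_Ioi] with t (ht : 0 < t) z hz
    have hz₀ : 0 ≤ z := hspec hz
    rw [Real.norm_of_nonneg (rpowIntegrand₀₁_nonneg hp.1 ht.le hz₀),
      Real.norm_of_nonneg (rpowIntegrand₀₁_nonneg hp.1 ht.le hM₀)]
    exact rpowIntegrand₀₁_monotoneOn hp ht.le hz₀ hM₀ ((hM hz).trans (le_max_left _ _))
  have hfin : HasFiniteIntegral (fun t => ‖rpowIntegrand₀₁ p t (max M 0)‖) (μ.restrict (Ioi 0)) :=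
    (hμ _ hM₀).1.2.norm
  refine ⟨integrableOn_cfc measurableSet_Ioi _ _ a hf hbound hfin ha, ?_⟩
  calc cfc (fun x : ℝ => x ^ p) a = cfc (fun x => ∫ t in Ioi 0, rpowIntegrand₀₁ p t x ∂μ) a :=
        cfc_congr fun x hx => (hμ x (hspec hx)).2
    _ = _ := cfc_setIntegral measurableSet_Ioi _ _ a hf hbound hfin ha

end IntegralRepresentation

lemma integral_inner_apply_self {X E : Type*} [MeasurableSpace X] {μ : Measure X}
    [NormedAddCommGroup E] [InnerProductSpace ℝ E] [CompleteSpace E] {F : X → E →L[ℝ] E}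
    (hF : Integrable F μ) (v : E) :
    Integrable (fun t => ⟪F t v, v⟫_ℝ) μ ∧ ∫ t, ⟪F t v, v⟫_ℝ ∂μ = ⟪(∫ t, F t ∂μ) v, v⟫_ℝ := by
  let L : (E →L[ℝ] E) →L[ℝ] ℝ := (innerSL ℝ v).comp (apply ℝ E v)
  have hL : ∀ T, L T = ⟪T v, v⟫_ℝ := fun T => real_inner_comm _ _
  simp only [← hL]
  exact ⟨L.integrable_comp hF, L.integral_comp_comm hF⟩

namespace ContinuousLinearMap

lemma opNorm_comp_le_of_forall_norm_apply_le {𝕜 E F G G' : Type*}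
    [NontriviallyNormedField 𝕜] [SeminormedAddCommGroup E] [NormedSpace 𝕜 E]
    [SeminormedAddCommGroup F] [NormedSpace 𝕜 F] [SeminormedAddCommGroup G] [NormedSpace 𝕜 G]
    [SeminormedAddCommGroup G'] [NormedSpace 𝕜 G'] {S : F →L[𝕜] G} {T : F →L[𝕜] G'}
    (h : ∀ y, ‖S y‖ ≤ ‖T y‖) (X : E →L[𝕜] F) : ‖S ∘L X‖ ≤ ‖T ∘L X‖ :=
  opNorm_le_bound _ (norm_nonneg _) fun w => (h (X w)).trans ((T ∘L X).le_opNorm w)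

section OneSpace

variable {E : Type*} [NormedAddCommGroup E] [InnerProductSpace ℝ E] [CompleteSpace E]
  {T : E →L[ℝ] E}

lemma IsPositive.spectrum_subset_Ici (hT : T.IsPositive) : spectrum ℝ T ⊆ Ici 0 :=
  SpectrumRestricts.nnreal_iff.mp hT.spectrumRestricts

lemma IsPositive.continuousOn_inv_const_add (hT : T.IsPositive) {t : ℝ} (ht : 0 < t) :
    ContinuousOn (fun x : ℝ => (t + x)⁻¹) (spectrum ℝ T) :=
  ContinuousOn.inv₀ (by fun_prop) fun x hx => by
    have : (0 : ℝ) ≤ x := hT.spectrum_subset_Ici hx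
    positivity

variable [ContinuousFunctionalCalculus ℝ (E →L[ℝ] E) IsSelfAdjoint]

lemma IsPositive.smul_one_add_comp_cfc_inv (hT : T.IsPositive) {t : ℝ} (ht : 0 < t) :
    (t • 1 + T) ∘L cfc (fun x : ℝ => (t + x)⁻¹) T = 1 := by
  have hsa := hT.isSelfAdjoint
  have hinv := hT.continuousOn_inv_const_add ht
  have hcancel : (spectrum ℝ T).EqOn (fun x => (t + x) * (t + x)⁻¹) 1 := fun x hx => by
    have : (0 : ℝ) ≤ x := hT.spectrum_subset_Ici hx
    simp only [Pi.one_apply]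
    field_simp
  change (t • 1 + T) * _ = 1
  rw [← Algebra.algebraMap_eq_smul_one]
  nth_rw 1 [← cfc_id' ℝ T]
  rw [← cfc_const_add t _ T, ← cfc_mul _ _ T, cfc_congr hcancel, Pi.one_def, cfc_const_one ℝ T]

lemma IsPositive.cfc_rpowIntegrand₀₁_eq (hT : T.IsPositive) {p t : ℝ} (hp : p ≠ 1) (ht : 0 < t) :
    cfc (rpowIntegrand₀₁ p t) T = t ^ (p - 1) • 1 - t ^ p • cfc (fun x : ℝ => (t + x)⁻¹) T := by
  have hsa := hT.isSelfAdjoint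
  have hinv := hT.continuousOn_inv_const_add ht
  rw [rpowIntegrand₀₁_eq_sub hp ht, cfc_sub _ _ T, cfc_const _ T, cfc_const_mul _ _ T,
    Algebra.algebraMap_eq_smul_one]

lemma isSelfAdjoint_opow (T : E →L[ℝ] E) (t : ℝ) : IsSelfAdjoint (opow T t) :=
  cfc_predicate _ T

lemma adjoint_opow (T : E →L[ℝ] E) (t : ℝ) : adjoint (opow T t) = opow T t :=
  (isSelfAdjoint_opow T t).adjoint_eq

lemma IsPositive.norm_opow_apply_sq (hT : T.IsPositive) {r : ℝ} (hr : 0 ≤ r) (z : E) :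
    ‖opow T r z‖ ^ 2 = ⟪opow T (r * 2) z, z⟫_ℝ := by
  have hsa := hT.isSelfAdjoint
  have hmul : opow T (r * 2) = opow T r * opow T r := by
    rw [opow, opow, ← sq, ← cfc_pow _ _ T]
    exact cfc_congr fun x hx => by exact_mod_cast rpow_mul_natCast (hT.spectrum_subset_Ici hx) r 2
  rw [← real_inner_self_eq_norm_sq, hmul]
  exact ((isSelfAdjoint_opow T r).isSymmetric _ _).symm

end OneSpace

section Compression

variable {H K : Type*} [NormedAddCommGroup H] [InnerProductSpace ℝ H] [CompleteSpace H]
  [NormedAddCommGroup K] [InnerProductSpace ℝ K] [CompleteSpace K]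
  {V : K →L[ℝ] H}

lemma inner_map_map_of_adjoint_comp_self (hV : adjoint V ∘L V = 1) (x y : K) :
    ⟪V x, V y⟫_ℝ = ⟪x, y⟫_ℝ := by
  rw [← adjoint_inner_right, ← comp_apply, hV, one_apply_eq_self]

/-- With `y = S x` and `w = R (V x)`, the gap between the two sides is
`⟪P (w - V y), w - V y⟫ ≥ 0`. -/
lemma IsPositive.inner_inverse_compression_le {P R : H →L[ℝ] H} {S : K →L[ℝ] K}
    (hP : P.IsPositive) (hV : adjoint V ∘L V = 1) (hR : P ∘L R = 1)
    (hS : (adjoint V ∘L P ∘L V) ∘L S = 1) (x : K) :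
    ⟪S x, x⟫_ℝ ≤ ⟪R (V x), V x⟫_ℝ := by
  have hPw : P (R (V x)) = V x := by rw [← comp_apply, hR, one_apply_eq_self]
  have hPVy : adjoint V (P (V (S x))) = x := by
    simpa using congrArg (fun T : K →L[ℝ] K => T x) hS
  have hww : ⟪P (R (V x)), R (V x)⟫_ℝ = ⟪R (V x), V x⟫_ℝ := by rw [hPw, real_inner_comm]
  have hwy : ⟪P (R (V x)), V (S x)⟫_ℝ = ⟪S x, x⟫_ℝ := by
    rw [hPw, inner_map_map_of_adjoint_comp_self hV, real_inner_comm]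
  have hyw : ⟪P (V (S x)), R (V x)⟫_ℝ = ⟪S x, x⟫_ℝ := by
    rw [hP.inner_left_eq_inner_right, hPw, inner_map_map_of_adjoint_comp_self hV]
  have hyy : ⟪P (V (S x)), V (S x)⟫_ℝ = ⟪S x, x⟫_ℝ := by
    rw [← adjoint_inner_left, hPVy, real_inner_comm]
  have hgap := hP.inner_nonneg_left (R (V x) - V (S x))
  simp only [map_sub, inner_sub_left, inner_sub_right, hww, hwy, hyw, hyy] at hgap
  linarith

variable [ContinuousFunctionalCalculus ℝ (H →L[ℝ] H) IsSelfAdjoint]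
  [ContinuousFunctionalCalculus ℝ (K →L[ℝ] K) IsSelfAdjoint] {A : H →L[ℝ] H}

lemma IsPositive.inner_cfc_rpowIntegrand₀₁_compression_le (hA : A.IsPositive)
    (hV : adjoint V ∘L V = 1) {p t : ℝ} (hp : p ≠ 1) (ht : 0 < t) (x : K) :
    ⟪cfc (rpowIntegrand₀₁ p t) A (V x), V x⟫_ℝ
      ≤ ⟪cfc (rpowIntegrand₀₁ p t) (adjoint V ∘L A ∘L V) x, x⟫_ℝ := by
  have hC := hA.adjoint_conj V
  have hshift : adjoint V ∘L (t • 1 + A) ∘L V = t • 1 + adjoint V ∘L A ∘L V := by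
    rw [add_comp, comp_add, smul_comp, comp_smul, one_def, id_comp, hV]
  have hres := ((isPositive_one.smul_of_nonneg ht.le).add hA).inner_inverse_compression_le hV
    (hA.smul_one_add_comp_cfc_inv ht) (hshift ▸ hC.smul_one_add_comp_cfc_inv ht) x
  rw [hA.cfc_rpowIntegrand₀₁_eq hp ht, hC.cfc_rpowIntegrand₀₁_eq hp ht]
  simp only [sub_apply, smul_apply, one_apply_eq_self, inner_sub_left, real_inner_smul_left,
    inner_map_map_of_adjoint_comp_self hV]
  gcongr

/-- Hansen's inequality `V* A^p V ≤ (V* A V)^p`. -/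
lemma IsPositive.inner_opow_compression_le (hA : A.IsPositive) (hV : adjoint V ∘L V = 1)
    {p : ℝ} (hp : p ∈ Icc 0 1) (x : K) :
    ⟪opow A p (V x), V x⟫_ℝ ≤ ⟪opow (adjoint V ∘L A ∘L V) p x, x⟫_ℝ := by
  have hC := hA.adjoint_conj V
  rcases hp.1.eq_or_lt with rfl | hp₀
  · simp only [opow, rpow_zero, cfc_const_one ℝ A hA.isSelfAdjoint,
      cfc_const_one ℝ _ hC.isSelfAdjoint, one_apply_eq_self,
      inner_map_map_of_adjoint_comp_self hV, le_refl]
  rcases hp.2.eq_or_lt with rfl | hp₁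
  · simp [opow, cfc_id' ℝ A hA.isSelfAdjoint, cfc_id' ℝ _ hC.isSelfAdjoint, adjoint_inner_left]
  obtain ⟨μ, hμ⟩ := exists_measure_rpow_eq_integral_rpowIntegrand₀₁ ⟨hp₀, hp₁⟩
  obtain ⟨hintA, hrepA⟩ := cfc_rpow_eq_setIntegral_rpowIntegrand₀₁ ⟨hp₀, hp₁⟩ hμ
    hA.isSelfAdjoint hA.spectrum_subset_Ici
  obtain ⟨hintC, hrepC⟩ := cfc_rpow_eq_setIntegral_rpowIntegrand₀₁ ⟨hp₀, hp₁⟩ hμ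
    hC.isSelfAdjoint hC.spectrum_subset_Ici
  obtain ⟨hintA', hA'⟩ := integral_inner_apply_self hintA (V x)
  obtain ⟨hintC', hC'⟩ := integral_inner_apply_self hintC x
  rw [opow, opow, hrepA, hrepC, ← hA', ← hC']
  exact setIntegral_mono_on hintA' hintC' measurableSet_Ioi fun t ht =>
    hA.inner_cfc_rpowIntegrand₀₁_compression_le hV hp₁.ne ht x

lemma IsPositive.norm_opow_comp_compression_le (hA : A.IsPositive) (hV : adjoint V ∘L V = 1)
    {r : ℝ} (hr : r ∈ Icc 0 (1 / 2)) {F : Type*} [NormedAddCommGroup F] [NormedSpace ℝ F]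
    (X : F →L[ℝ] K) : ‖opow A r ∘L V ∘L X‖ ≤ ‖opow (adjoint V ∘L A ∘L V) r ∘L X‖ := by
  have hC := hA.adjoint_conj V
  refine opNorm_comp_le_of_forall_norm_apply_le (S := opow A r ∘L V) (fun y => ?_) X
  rw [← pow_le_pow_iff_left₀ (norm_nonneg _) (norm_nonneg _) two_ne_zero, comp_apply,
    hA.norm_opow_apply_sq hr.1, hC.norm_opow_apply_sq hr.1]
  exact hA.inner_opow_compression_le hV ⟨by linarith [hr.1], by linarith [hr.2]⟩ y

end Compression

end ContinuousLinearMap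

theorem stmt3_general
    {H K : Type*}
    [NormedAddCommGroup H] [InnerProductSpace ℝ H] [CompleteSpace H]
    [NormedAddCommGroup K] [InnerProductSpace ℝ K] [CompleteSpace K]
    [ContinuousFunctionalCalculus ℝ (H →L[ℝ] H) IsSelfAdjoint]
    [ContinuousFunctionalCalculus ℝ (K →L[ℝ] K) IsSelfAdjoint]
    (A : H →L[ℝ] H) (hA : A.IsPositive)
    (V : K →L[ℝ] H) (hV : adjoint V ∘L V = 1)
    (B : K →L[ℝ] K)
    (r s : ℝ) (hr0 : 0 ≤ r) (hr : r ≤ 1 / 2) (hs0 : 0 ≤ s) (hs : s ≤ 1 / 2) :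
    ‖opow A r ∘L V ∘L B ∘L adjoint V ∘L opow A s‖ ≤
      ‖opow (adjoint V ∘L A ∘L V) r ∘L B ∘L opow (adjoint V ∘L A ∘L V) s‖ := by
  set C := adjoint V ∘L A ∘L V
  calc ‖opow A r ∘L V ∘L B ∘L adjoint V ∘L opow A s‖
      ≤ ‖opow C r ∘L B ∘L adjoint V ∘L opow A s‖ :=
        hA.norm_opow_comp_compression_le hV ⟨hr0, hr⟩ _
    _ = ‖opow A s ∘L V ∘L adjoint B ∘L opow C r‖ := by
        rw [← adjoint.norm_map]
        simp only [adjoint_comp, adjoint_opow, adjoint_adjoint, comp_assoc]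
    _ ≤ ‖opow C s ∘L adjoint B ∘L opow C r‖ :=
        hA.norm_opow_comp_compression_le hV ⟨hs0, hs⟩ _
    _ = ‖opow C r ∘L B ∘L opow C s‖ := by
        rw [← adjoint.norm_map]
        simp only [adjoint_comp, adjoint_opow, adjoint_adjoint, comp_assoc]

/-- the operator inequality (Rudi et al., Proposition 6). -/
theorem stmt3
    {H K : Type*}
    [NormedAddCommGroup H] [InnerProductSpace ℝ H] [CompleteSpace H]
    [TopologicalSpace.SeparableSpace H]
    [NormedAddCommGroup K] [InnerProductSpace ℝ K] [CompleteSpace K]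
    [TopologicalSpace.SeparableSpace K]
    [ContinuousFunctionalCalculus ℝ (H →L[ℝ] H) IsSelfAdjoint]
    [ContinuousFunctionalCalculus ℝ (K →L[ℝ] K) IsSelfAdjoint]
    (A : H →L[ℝ] H) (hA : A.IsPositive)
    (V : K →L[ℝ] H) (hV : adjoint V ∘L V = 1)
    (B : K →L[ℝ] K)
    (r s : ℝ) (hr0 : 0 ≤ r) (hr : r ≤ 1 / 2) (hs0 : 0 ≤ s) (hs : s ≤ 1 / 2) :
    ‖opow A r ∘L V ∘L B ∘L adjoint V ∘L opow A s‖ ≤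
      ‖opow (adjoint V ∘L A ∘L V) r ∘L B ∘L opow (adjoint V ∘L A ∘L V) s‖ :=
  stmt3_general A hA V hV B r s hr0 hr hs0 hs
end

section
/- Let (Ω, F, P) be a probability space and let ξ : Ω → [0, ∞) be a random variable. Let A, b, c > 0. If for every δ ∈ (0, 1) one has P[ξ ≤ A·(log(c/δ))^b] ≥ 1 − δ, then E[ξ] ≤ c·Γ(b + 1)·A, where Γ denotes the Gamma function. -/
/-!
If `P[ξ ≤ A log(c/δ)^b] ≥ 1 - δ` for all `δ`, then choosing `δ = c exp(-(t/A)^(1/b))` gives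
the tail bound `P[ξ > t] ≤ c exp(-(t/A)^(1/b))`. Integrating it over `t > 0` (layer cake formula)
bounds `E ξ` by `c ∫₀^∞ exp(-(t/A)^(1/b)) dt`, which the substitution `t = A s` turns into
`c A Γ(b + 1)`.
-/

open MeasureTheory Real Set

theorem ENNReal.one_sub_ofReal_one_sub_le (δ : ℝ) :
    1 - ENNReal.ofReal (1 - δ) ≤ ENNReal.ofReal δ := by
  rw [tsub_le_iff_right, ← ENNReal.ofReal_one]
  calc ENNReal.ofReal 1 = ENNReal.ofReal (δ + (1 - δ)) := by ring_nf
    _ ≤ _ := ENNReal.ofReal_add_le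

theorem prob_compl_le_of_ofReal_one_sub_le {Ω : Type*} [MeasurableSpace Ω] {μ : Measure Ω}
    [IsProbabilityMeasure μ] {s : Set Ω} (hs : MeasurableSet s) {δ : ℝ}
    (h : ENNReal.ofReal (1 - δ) ≤ μ s) : μ sᶜ ≤ ENNReal.ofReal δ :=
  calc μ sᶜ = 1 - μ s := prob_compl_eq_one_sub hs
    _ ≤ 1 - ENNReal.ofReal (1 - δ) := tsub_le_tsub_left h 1
    _ ≤ ENNReal.ofReal δ := ENNReal.one_sub_ofReal_one_sub_le δ

theorem lintegral_ofReal_le_of_meas_lt_le {α : Type*} [MeasurableSpace α] {μ : Measure α}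
    {f : α → ℝ} (hf_nn : 0 ≤ᵐ[μ] f) (hf : AEMeasurable f μ) {g : ℝ → ENNReal}
    (hg : Measurable g) (htail : ∀ t ∈ Ioi (0 : ℝ), μ {x | t < f x} ≤ g t) :
    ∫⁻ x, ENNReal.ofReal (f x) ∂μ ≤ ∫⁻ t in Ioi 0, g t := by
  rw [lintegral_eq_lintegral_meas_lt μ hf_nn hf]
  exact setLIntegral_mono hg htail

theorem integral_exp_neg_div_rpow {A p : ℝ} (hA : 0 < A) (hp : 0 < p) :
    ∫ t in Ioi 0, exp (-(t / A) ^ p) = A * Gamma (1 / p + 1) := by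
  simp_rw [div_eq_mul_inv _ A]
  rw [integral_comp_mul_right_Ioi (fun t => exp (-t ^ p)) 0 (inv_pos.2 hA), zero_mul,
    integral_exp_neg_rpow hp, inv_inv, smul_eq_mul]

theorem lintegral_exp_neg_div_rpow {A p : ℝ} (hA : 0 < A) (hp : 0 < p) :
    ∫⁻ t in Ioi 0, ENNReal.ofReal (exp (-(t / A) ^ p)) =
      ENNReal.ofReal (A * Gamma (1 / p + 1)) := by
  have hint := integral_exp_neg_div_rpow hA hp
  have hpos : 0 < A * Gamma (1 / p + 1) := mul_pos hA (Gamma_pos_of_pos (by positivity))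
  rw [← hint, ofReal_integral_eq_lintegral_ofReal
    (Integrable.of_integral_ne_zero (hint ▸ hpos.ne')) (ae_of_all _ fun t => (exp_pos _).le)]

theorem meas_lt_le_mul_exp_neg_of_forall_le_log_rpow {Ω : Type*} [MeasurableSpace Ω]
    {P : Measure Ω} [IsProbabilityMeasure P] {ξ : Ω → ℝ} (hξ : Measurable ξ) {A b c : ℝ}
    (hA : 0 < A) (hb : 0 < b) (hc : 0 < c)
    (h : ∀ δ ∈ Ioo (0 : ℝ) 1,
      ENNReal.ofReal (1 - δ) ≤ P {ω | ξ ω ≤ A * log (c / δ) ^ b})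
    {t : ℝ} (ht : 0 < t) :
    P {ω | t < ξ ω} ≤ ENNReal.ofReal (c * exp (-(t / A) ^ b⁻¹)) := by
  set x := (t / A) ^ b⁻¹
  set δ := c * exp (-x)
  rcases lt_or_ge δ 1 with hδ | hδ
  · have hlevel : A * log (c / δ) ^ b = t := by
      rw [div_mul_cancel_left₀ hc.ne', ← exp_neg, neg_neg, log_exp,
        ← rpow_mul (by positivity), inv_mul_cancel₀ hb.ne', rpow_one,
        mul_div_cancel₀ _ hA.ne']
    have hconf := h δ ⟨by positivity, hδ⟩
    rw [hlevel] at hconf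
    simpa only [compl_ofPred, not_le] using
      prob_compl_le_of_ofReal_one_sub_le (measurableSet_le hξ measurable_const) hconf
  · exact prob_le_one.trans (ENNReal.one_le_ofReal.2 hδ)

/-- the probability-to-expectation lemma. -/
theorem stmt6
    {Ω : Type*} [MeasurableSpace Ω] (P : Measure Ω) [IsProbabilityMeasure P]
    (ξ : Ω → ℝ) (hmeas : Measurable ξ) (hnn : ∀ ω, 0 ≤ ξ ω)
    (A b c : ℝ) (hA : 0 < A) (hb : 0 < b) (hc : 0 < c)
    (h : ∀ δ : ℝ, δ ∈ Set.Ioo (0 : ℝ) 1 →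
      ENNReal.ofReal (1 - δ) ≤ P {ω | ξ ω ≤ A * Real.log (c / δ) ^ b}) :
    ∫⁻ ω, ENNReal.ofReal (ξ ω) ∂P ≤ ENNReal.ofReal (c * Real.Gamma (b + 1) * A) := by
  calc ∫⁻ ω, ENNReal.ofReal (ξ ω) ∂P
      ≤ ∫⁻ t in Ioi 0, ENNReal.ofReal c * ENNReal.ofReal (exp (-(t / A) ^ b⁻¹)) := by
        refine lintegral_ofReal_le_of_meas_lt_le (ae_of_all _ hnn) hmeas.aemeasurable
          (by fun_prop) fun t ht => ?_
        rw [← ENNReal.ofReal_mul hc.le]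
        exact meas_lt_le_mul_exp_neg_of_forall_le_log_rpow hmeas hA hb hc h ht
    _ = ENNReal.ofReal (c * Gamma (b + 1) * A) := by
        rw [lintegral_const_mul _ (by fun_prop), lintegral_exp_neg_div_rpow hA (inv_pos.2 hb),
          one_div, inv_inv, ← ENNReal.ofReal_mul hc.le, mul_comm A, mul_assoc]
end
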